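/- Let φ : Σ_A → ℝ be d-Hölder continuous and suppose φ has zero pressure, in the sense that there exists a Gibbs measure for φ with pressure P = 0. Then φ is cohomologous to a strictly negative Hölder continuous function: there exists a d-Hölder continuous u : Σ_A → ℝ such that φ(ω) + u(ω) − u(σ(ω)) < 0 for every ω ∈ Σ_A. -/
import Mathlib


open MeasureTheory Filter
open scoped ENNReal NNReal

namespace SFT

variable {l : ℕ}

/-- The one-sided subshift of finite type determined by the `l × l` matrix `A`:
infinite sequences with transitions allowed by `A`. -/
abbrev SigmaA (l : ℕ) (A : Matrix (Fin l) (Fin l) ℕ) : Type :=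
  {ω : ℕ → Fin l // ∀ k, A (ω k) (ω (k + 1)) = 1}

/-- The left shift `σ` on `SigmaA l A`. -/
def shift {A : Matrix (Fin l) (Fin l) ℕ} (ω : SigmaA l A) : SigmaA l A :=
  ⟨fun n => ω.1 (n + 1), fun k => ω.2 (k + 1)⟩

/-- Birkhoff sums `S_k φ = ∑_{m<k} φ ∘ σ^m`. -/
def birkhoff {A : Matrix (Fin l) (Fin l) ℕ} (φ : SigmaA l A → ℝ) (k : ℕ) (ω : SigmaA l A) : ℝ :=
  ∑ m ∈ Finset.range k, φ (shift^[m] ω)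

/-- The matrix `A` has `0`-`1` entries and is irreducible and aperiodic
(some power of `A` has all entries strictly positive). -/
def Primitive (A : Matrix (Fin l) (Fin l) ℕ) : Prop :=
  (∀ i j, A i j = 0 ∨ A i j = 1) ∧ ∃ n : ℕ, 0 < n ∧ ∀ i j, 0 < (A ^ n) i j

/-- A finite word is admissible, i.e. belongs to `Σ_A^*`. -/
def Admissible (A : Matrix (Fin l) (Fin l) ℕ) (x : List (Fin l)) : Prop :=
  x ≠ [] ∧ ∀ (i : ℕ) (h : i + 1 < x.length), A (x[i]'(by omega)) (x[i + 1]'h) = 1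

/-- The cylinder set `[x]` of a finite word (the empty word gives all of `Σ_A`). -/
def cylinder (A : Matrix (Fin l) (Fin l) ℕ) (x : List (Fin l)) : Set (SigmaA l A) :=
  {ω | ∀ (i : ℕ) (h : i < x.length), ω.1 i = x[i]'h}

/-- The initial word `(ω_1, …, ω_k)` of `ω`. -/
def wordPrefix {A : Matrix (Fin l) (Fin l) ℕ} (ω : SigmaA l A) (k : ℕ) : List (Fin l) :=
  List.ofFn (fun i : Fin k => ω.1 i)

/-- `μ` is a Gibbs measure for the potential `φ` with pressure `P`:
`c⁻¹ ≤ μ([ω_1,…,ω_k]) / exp(S_kφ(ω) − kP) ≤ c` for some `c > 1`. -/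
def IsGibbs {A : Matrix (Fin l) (Fin l) ℕ} (φ : SigmaA l A → ℝ) (P : ℝ)
    (μ : Measure (SigmaA l A)) : Prop :=
  ∃ c : ℝ, 1 < c ∧ ∀ (ω : SigmaA l A) (k : ℕ), 0 < k →
    c⁻¹ ≤ (μ (cylinder A (wordPrefix ω k))).toReal / Real.exp (birkhoff φ k ω - k * P) ∧
      (μ (cylinder A (wordPrefix ω k))).toReal / Real.exp (birkhoff φ k ω - k * P) ≤ c

/-- `φ` is Hölder continuous with respect to the metric `d(ω,υ) = 2^{-(ω ∧ υ)}`: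
there are `C` and an exponent `s > 0` with `|φ(ω) − φ(υ)| ≤ C ⬝ d(ω,υ)^s`, i.e.
`|φ(ω) − φ(υ)| ≤ C ⬝ 2^{-sn}` whenever `ω` and `υ` agree in their first `n` coordinates. -/
def HolderCont {A : Matrix (Fin l) (Fin l) ℕ} (φ : SigmaA l A → ℝ) : Prop :=
  ∃ C s : ℝ, 0 < s ∧ ∀ (ω υ : SigmaA l A) (n : ℕ),
    (∀ i < n, ω.1 i = υ.1 i) → |φ ω - φ υ| ≤ C * (2 : ℝ) ^ (-(s * n))

lemma shift_iterate_coord (ω : SigmaA l A) (m n : ℕ) : (shift^[m] ω).1 n = ω.1 (n + m) := by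
  induction m generalizing ω n with
  | zero => rfl
  | succ m ih =>
    rw [Function.iterate_succ_apply, ih]
    rfl

lemma birkhoff_add (φ : SigmaA l A → ℝ) (k j : ℕ) (ω : SigmaA l A) :
    birkhoff φ (k + j) ω = birkhoff φ k ω + birkhoff φ j (shift^[k] ω) := by
  induction j with
  | zero => simp [birkhoff]
  | succ j ih =>
    have : k + (j + 1) = (k + j) + 1 := by omega
    rw [this]
    unfold birkhoff at *
    rw [Finset.sum_range_succ, ih, Finset.sum_range_succ, ← Function.iterate_add_apply]
    ring_nf

lemma geom_bound {r : ℝ} (hr0 : 0 ≤ r) (hr1 : r < 1) (k : ℕ) :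
    ∑ j ∈ Finset.range k, r ^ j ≤ (1 - r)⁻¹ := by
  have hne : r ≠ 1 := ne_of_lt hr1
  have h1r : (0:ℝ) < 1 - r := by linarith
  have hmul := geom_sum_mul r k
  have hX : (∑ j ∈ Finset.range k, r ^ j) * (1 - r) = 1 - r ^ k := by
    have : (∑ j ∈ Finset.range k, r ^ j) * (1 - r) = -((∑ j ∈ Finset.range k, r ^ j) * (r - 1)) := by ring
    rw [this, hmul]; ring
  have hpk : 0 ≤ r ^ k := pow_nonneg hr0 k
  have : (∑ j ∈ Finset.range k, r ^ j) ≤ 1 / (1 - r) := by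
    rw [le_div_iff₀ h1r, hX]
    linarith
  rwa [one_div] at this

/-- normalized Hölder bound -/
def HolderWith (C s : ℝ) (φ : SigmaA l A → ℝ) : Prop :=
  ∀ (ω υ : SigmaA l A) (n : ℕ),
    (∀ i < n, ω.1 i = υ.1 i) → |φ ω - φ υ| ≤ C * (2 : ℝ) ^ (-(s * n))

lemma rpow_nat_eq (s : ℝ) (j : ℕ) : (2 : ℝ) ^ (-(s * j)) = ((2 : ℝ) ^ (-s)) ^ j := by
  rw [← Real.rpow_natCast ((2:ℝ) ^ (-s)) j, ← Real.rpow_mul (by norm_num : (0:ℝ) ≤ 2)]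
  ring_nf

lemma two_rpow_pos (y : ℝ) : 0 < (2 : ℝ) ^ y := Real.rpow_pos_of_pos (by norm_num) y

lemma holder_exists_nonneg (φ : SigmaA l A → ℝ) (h : HolderCont φ) :
    ∃ C s : ℝ, 0 ≤ C ∧ 0 < s ∧ HolderWith C s φ := by
  obtain ⟨C, s, hs, hH⟩ := h
  refine ⟨max C 0, s, le_max_right _ _, hs, fun ω υ n hag => ?_⟩
  exact le_trans (hH ω υ n hag)
    (mul_le_mul_of_nonneg_right (le_max_left _ _) (two_rpow_pos _).le)

lemma HolderWith.mono_exp {C s s' : ℝ} {φ : SigmaA l A → ℝ} (hC : 0 ≤ C)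
    (hs' : 0 < s') (hle : s' ≤ s) (h : HolderWith C s φ) : HolderWith C s' φ := by
  intro ω υ n hag
  refine le_trans (h ω υ n hag) (mul_le_mul_of_nonneg_left ?_ hC)
  apply Real.rpow_le_rpow_of_exponent_le (by norm_num)
  have : (0:ℝ) ≤ (n:ℝ) := Nat.cast_nonneg n
  nlinarith

lemma HolderWith.add {C₁ C₂ s : ℝ} {φ ψ : SigmaA l A → ℝ}
    (h₁ : HolderWith C₁ s φ) (h₂ : HolderWith C₂ s ψ) :
    HolderWith (C₁ + C₂) s (fun ω => φ ω + ψ ω) := by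
  intro ω υ n hag
  have := abs_add_le (φ ω - φ υ) (ψ ω - ψ υ)
  have b1 := h₁ ω υ n hag
  have b2 := h₂ ω υ n hag
  have : |φ ω + ψ ω - (φ υ + ψ υ)| ≤ |φ ω - φ υ| + |ψ ω - ψ υ| := by
    have h3 : φ ω + ψ ω - (φ υ + ψ υ) = (φ ω - φ υ) + (ψ ω - ψ υ) := by ring
    rw [h3]; exact abs_add_le _ _
  nlinarith [two_rpow_pos (-(s * n))]

lemma HolderWith.const_mul {C s : ℝ} {φ : SigmaA l A → ℝ} (a : ℝ)
    (h : HolderWith C s φ) : HolderWith (|a| * C) s (fun ω => a * φ ω) := by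
  intro ω υ n hag
  have : |a * φ ω - a * φ υ| = |a| * |φ ω - φ υ| := by
    rw [← abs_mul]; ring_nf
  rw [this, mul_assoc]
  exact mul_le_mul_of_nonneg_left (h ω υ n hag) (abs_nonneg a)

lemma HolderWith.comp_shift {C s : ℝ} {φ : SigmaA l A → ℝ} (hC : 0 ≤ C) (hs : 0 < s)
    (h : HolderWith C s φ) : HolderWith (C * (2:ℝ) ^ s) s (fun ω => φ (shift ω)) := by
  intro ω υ n hag
  rcases Nat.eq_zero_or_pos n with hn | hn
  · subst hn
    have h0 := h (shift ω) (shift υ) 0 (by intro i hi; omega)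
    simp only [Nat.cast_zero, mul_zero, neg_zero, Real.rpow_zero, mul_one] at h0 ⊢
    refine le_trans h0 ?_
    have : (1:ℝ) ≤ (2:ℝ) ^ s := Real.one_le_rpow one_le_two hs.le
    nlinarith
  · have hagree : ∀ i < n - 1, (shift ω).1 i = (shift υ).1 i := by
      intro i hi
      exact hag (i + 1) (by omega)
    have hb := h (shift ω) (shift υ) (n - 1) hagree
    refine le_trans hb ?_
    have hcast : ((n - 1 : ℕ) : ℝ) = (n : ℝ) - 1 := by
      rw [Nat.cast_sub hn]; norm_num
    have hexp : -(s * ((n - 1 : ℕ) : ℝ)) = s + -(s * n) := by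
      rw [hcast]; ring
    rw [hexp, Real.rpow_add (by norm_num : (0:ℝ) < 2), ← mul_assoc]

lemma HolderWith.zero (s : ℝ) : HolderWith 0 s (fun _ : SigmaA l A => (0:ℝ)) := by
  intro ω υ n hag
  simp

lemma HolderWith.comp_iterate {C s : ℝ} {φ : SigmaA l A → ℝ} (hC : 0 ≤ C) (hs : 0 < s)
    (h : HolderWith C s φ) (j : ℕ) :
    HolderWith (C * ((2:ℝ) ^ s) ^ j) s (fun ω => φ (shift^[j] ω)) := by
  induction j with
  | zero => simpa using h
  | succ j ih =>
    have := ih.comp_shift (by positivity) hs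
    have heq : (fun ω : SigmaA l A => φ (shift^[j] (shift ω)))
        = fun ω => φ (shift^[j+1] ω) := by
      funext ω; rw [Function.iterate_succ_apply]
    rw [heq] at this
    have hc2 : C * ((2:ℝ) ^ s) ^ j * (2:ℝ) ^ s = C * ((2:ℝ) ^ s) ^ (j + 1) := by ring
    rwa [hc2] at this

lemma HolderWith.sum {s : ℝ} {F : ℕ → SigmaA l A → ℝ} {c : ℕ → ℝ}
    (h : ∀ m, HolderWith (c m) s (F m)) (N : ℕ) :
    HolderWith (∑ m ∈ Finset.range N, c m) s (fun ω => ∑ m ∈ Finset.range N, F m ω) := by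
  induction N with
  | zero => simpa using HolderWith.zero (A := A) s
  | succ N ih =>
    have := ih.add (h N)
    simp only [Finset.sum_range_succ]
    exact this

lemma entry_one_of_ne_zero (hA : Primitive A) {i j : Fin l} (h : A i j ≠ 0) : A i j = 1 :=
  (hA.1 i j).resolve_left h

lemma exists_succ (hA : Primitive A) (i : Fin l) : ∃ j, A i j = 1 := by
  obtain ⟨h01, n, hn, hpos⟩ := hA
  obtain ⟨m, rfl⟩ := Nat.exists_eq_succ_of_ne_zero hn.ne'
  have h := (hpos i i).ne'
  rw [pow_succ'] at h   -- A^(m+1) = A * A^m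
  rw [Matrix.mul_apply] at h
  obtain ⟨k, _, hk⟩ := Finset.exists_ne_zero_of_sum_ne_zero h
  have : A i k ≠ 0 := fun h0 => hk (by simp [h0])
  exact ⟨k, (h01 i k).resolve_left this⟩

lemma exists_path (hA : Primitive A) : ∀ (n : ℕ) (i j : Fin l), (A ^ n) i j ≠ 0 →
    ∃ g : ℕ → Fin l, g 0 = i ∧ g n = j ∧ ∀ m < n, A (g m) (g (m + 1)) = 1 := by
  intro n
  induction n with
  | zero =>
    intro i j h
    rw [pow_zero] at h
    have : i = j := by
      by_contra hne
      rw [Matrix.one_apply_ne hne] at h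
      exact h rfl
    exact ⟨fun _ => i, rfl, this ▸ rfl, by omega⟩
  | succ n ih =>
    intro i j h
    rw [pow_succ, Matrix.mul_apply] at h
    obtain ⟨k, _, hk⟩ := Finset.exists_ne_zero_of_sum_ne_zero h
    have h1 : (A ^ n) i k ≠ 0 := fun h0 => hk (by simp [h0])
    have h2 : A k j ≠ 0 := fun h0 => hk (by simp [h0])
    obtain ⟨g, hg0, hgn, hgadj⟩ := ih i k h1
    refine ⟨fun m => if m ≤ n then g m else j, by simpa using hg0, by simp, ?_⟩
    intro m hm
    rcases Nat.lt_or_ge m n with hmn | hmn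
    · simp only [if_pos (by omega : m ≤ n), if_pos (by omega : m + 1 ≤ n)]
      exact hgadj m hmn
    · have hmeq : m = n := by omega
      subst hmeq
      simp only [if_pos le_rfl, if_neg (by omega : ¬ m + 1 ≤ m)]
      rw [hgn]
      exact entry_one_of_ne_zero hA h2

lemma exists_branch (hl : 2 ≤ l) (hA : Primitive A) :
    ∃ r s₁ s₂ : Fin l, s₁ ≠ s₂ ∧ A r s₁ = 1 ∧ A r s₂ = 1 := by
  by_contra hcon
  push_neg at hcon
  have huniq : ∀ r s₁ s₂ : Fin l, A r s₁ = 1 → A r s₂ = 1 → s₁ = s₂ := by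
    intro r s₁ s₂ h1 h2
    by_contra hne
    exact absurd h2 (hcon r s₁ s₂ hne h1)
  obtain ⟨h01, n, hn, hpos⟩ := hA
  have key : ∀ (m : ℕ) (i : Fin l), ∃ j, ∀ j', (A ^ m) i j' ≠ 0 → j' = j := by
    intro m
    induction m with
    | zero =>
      intro i
      refine ⟨i, fun j' h => ?_⟩
      by_contra hne
      rw [pow_zero, Matrix.one_apply_ne (fun e => hne e.symm)] at h
      exact h rfl
    | succ m ih =>
      intro i
      obtain ⟨j, hj⟩ := ih i
      obtain ⟨t, ht⟩ := exists_succ ⟨h01, n, hn, hpos⟩ j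
      refine ⟨t, fun j' h => ?_⟩
      rw [pow_succ, Matrix.mul_apply] at h
      obtain ⟨k, _, hk⟩ := Finset.exists_ne_zero_of_sum_ne_zero h
      have h1 : (A ^ m) i k ≠ 0 := fun h0 => hk (by simp [h0])
      have h2 : A k j' ≠ 0 := fun h0 => hk (by simp [h0])
      have : k = j := hj k h1
      subst this
      exact huniq k j' t ((h01 k j').resolve_left h2) ht
  obtain ⟨j, hj⟩ := key n ⟨0, by omega⟩
  have e1 : (⟨0, by omega⟩ : Fin l) = j := hj _ (hpos _ _).ne'
  have e2 : (⟨1, by omega⟩ : Fin l) = j := hj _ (hpos _ _).ne'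
  have : (⟨0, by omega⟩ : Fin l) = (⟨1, by omega⟩ : Fin l) := e1.trans e2.symm
  simp at this

lemma exists_extension (hA : Primitive A) (x : ℕ → Fin l) (K : ℕ) (hK : 0 < K)
    (hadm : ∀ m, m + 1 < K → A (x m) (x (m + 1)) = 1) :
    ∃ ω : SigmaA l A, ∀ m < K, ω.1 m = x m := by
  choose f hf using exists_succ hA
  refine ⟨⟨fun m => if m < K then x m else f^[m - (K - 1)] (x (K - 1)), ?_⟩, ?_⟩
  · intro m
    rcases Nat.lt_or_ge (m + 1) K with h1 | h1
    · simp only [if_pos (by omega : m < K), if_pos h1]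
      exact hadm m h1
    · rcases Nat.lt_or_ge m K with h2 | h2
      · have hm : m = K - 1 := by omega
        subst hm
        have hit : (K - 1) + 1 - (K - 1) = 1 := by omega
        simp only [if_pos (by omega : K - 1 < K), if_neg (by omega : ¬ (K - 1) + 1 < K), hit,
          Function.iterate_one]
        exact hf _
      · have hit : m + 1 - (K - 1) = (m - (K - 1)) + 1 := by omega
        simp only [if_neg (by omega : ¬ m < K), if_neg (by omega : ¬ m + 1 < K), hit,
          Function.iterate_succ_apply']
        exact hf _
  · intro m hm
    simp [if_pos hm]

lemma length_wordPrefix (ω : SigmaA l A) (k : ℕ) : (wordPrefix ω k).length = k := by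
  simp [wordPrefix]

lemma mem_cylinder_iff (ω υ : SigmaA l A) (k : ℕ) :
    υ ∈ cylinder A (wordPrefix ω k) ↔ ∀ i < k, υ.1 i = ω.1 i := by
  constructor
  · intro h i hi
    have := h i (by simpa [wordPrefix] using hi)
    simpa [wordPrefix] using this
  · intro h i hi
    have hik : i < k := by simpa [wordPrefix] using hi
    simpa [wordPrefix] using h i hik

lemma self_mem_cylinder (ω : SigmaA l A) (k : ℕ) : ω ∈ cylinder A (wordPrefix ω k) :=
  (mem_cylinder_iff ω ω k).2 (fun _ _ => rfl)

lemma cylinder_anti (ω : SigmaA l A) {j k : ℕ} (h : j ≤ k) :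
    cylinder A (wordPrefix ω k) ⊆ cylinder A (wordPrefix ω j) := by
  intro υ hυ
  rw [mem_cylinder_iff] at *
  exact fun i hi => hυ i (by omega)

lemma wordPrefix_eq_of_agree (ω υ : SigmaA l A) (k : ℕ)
    (h : ∀ i < k, ω.1 i = υ.1 i) : wordPrefix ω k = wordPrefix υ k := by
  unfold wordPrefix
  congr 1
  funext i
  exact h i i.2

lemma measurableSet_cylinder (x : List (Fin l)) : MeasurableSet (cylinder A x) := by
  have : cylinder A x = ⋂ (i : Fin x.length), (fun ω : SigmaA l A => ω.1 i) ⁻¹' {x[(i:ℕ)]} := by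
    ext ω
    simp only [Set.mem_iInter, Set.mem_preimage, Set.mem_singleton_iff, cylinder, Set.mem_setOf_eq]
    constructor
    · intro h i; exact h i i.2
    · intro h i hi; exact h ⟨i, hi⟩
  rw [this]
  exact MeasurableSet.iInter fun i =>
    ((measurable_pi_apply (i : ℕ)).comp measurable_subtype_coe) (measurableSet_singleton _)

lemma birkhoff_dist {C s : ℝ} {φ : SigmaA l A → ℝ} (hC : 0 ≤ C) (hs : 0 < s)
    (h : HolderWith C s φ) (ω υ : SigmaA l A) (k : ℕ)
    (hag : ∀ i < k, ω.1 i = υ.1 i) :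
    |birkhoff φ k ω - birkhoff φ k υ| ≤ C * (1 - (2:ℝ) ^ (-s))⁻¹ := by
  set r := (2:ℝ) ^ (-s) with hr
  have hr0 : 0 < r := two_rpow_pos _
  have hr1 : r < 1 := Real.rpow_lt_one_of_one_lt_of_neg one_lt_two (by linarith)
  have step : ∀ m < k, |φ (shift^[m] ω) - φ (shift^[m] υ)| ≤ C * r ^ (k - m) := by
    intro m hm
    have hagm : ∀ i < k - m, (shift^[m] ω).1 i = (shift^[m] υ).1 i := by
      intro i hi
      rw [shift_iterate_coord, shift_iterate_coord]
      exact hag (i + m) (by omega)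
    have hb := h _ _ (k - m) hagm
    rwa [rpow_nat_eq] at hb
  calc |birkhoff φ k ω - birkhoff φ k υ|
      = |∑ m ∈ Finset.range k, (φ (shift^[m] ω) - φ (shift^[m] υ))| := by
        rw [birkhoff, birkhoff, ← Finset.sum_sub_distrib]
    _ ≤ ∑ m ∈ Finset.range k, |φ (shift^[m] ω) - φ (shift^[m] υ)| :=
        Finset.abs_sum_le_sum_abs _ _
    _ ≤ ∑ m ∈ Finset.range k, C * r ^ (k - m) :=
        Finset.sum_le_sum (fun m hm => step m (Finset.mem_range.1 hm))
    _ = ∑ m ∈ Finset.range k, C * r ^ (m + 1) := by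
        rw [← Finset.sum_range_reflect (fun m => C * r ^ (m + 1)) k]
        refine Finset.sum_congr rfl (fun m hm => ?_)
        have hmk := Finset.mem_range.1 hm
        have : k - 1 - m + 1 = k - m := by omega
        rw [this]
    _ ≤ ∑ m ∈ Finset.range k, C * r ^ m :=
        Finset.sum_le_sum (fun m _ => mul_le_mul_of_nonneg_left
          (pow_le_pow_of_le_one hr0.le hr1.le (Nat.le_succ m)) hC)
    _ = C * ∑ m ∈ Finset.range k, r ^ m := by rw [Finset.mul_sum]
    _ ≤ C * (1 - r)⁻¹ := mul_le_mul_of_nonneg_left (geom_bound hr0.le hr1 k) hC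

lemma exists_birkhoff_neg (hl : 2 ≤ l) (hA : Primitive A) {φ : SigmaA l A → ℝ}
    (hφ : HolderCont φ) (μ : Measure (SigmaA l A)) [IsProbabilityMeasure μ]
    (hG : IsGibbs φ 0 μ) : ∃ N, 0 < N ∧ ∀ ω, birkhoff φ N ω < 0 := by
  obtain ⟨c, hc, hGb⟩ := hG
  have hc0 : (0:ℝ) < c := lt_trans one_pos hc
  have hcinv : (0:ℝ) < c⁻¹ := inv_pos.2 hc0
  have glower : ∀ (ω : SigmaA l A) (k : ℕ), 0 < k →
      c⁻¹ * Real.exp (birkhoff φ k ω) ≤ (μ (cylinder A (wordPrefix ω k))).toReal := by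
    intro ω k hk
    have h1 := (hGb ω k hk).1
    have hE : (0:ℝ) < Real.exp (birkhoff φ k ω - k * 0) := Real.exp_pos _
    rw [le_div_iff₀ hE] at h1
    calc c⁻¹ * Real.exp (birkhoff φ k ω)
        = c⁻¹ * Real.exp (birkhoff φ k ω - k * 0) := by norm_num
      _ ≤ _ := h1
  have gupper : ∀ (ω : SigmaA l A) (k : ℕ), 0 < k →
      (μ (cylinder A (wordPrefix ω k))).toReal ≤ c * Real.exp (birkhoff φ k ω) := by
    intro ω k hk
    have h1 := (hGb ω k hk).2
    have hE : (0:ℝ) < Real.exp (birkhoff φ k ω - k * 0) := Real.exp_pos _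
    rw [div_le_iff₀ hE] at h1
    calc (μ (cylinder A (wordPrefix ω k))).toReal
        ≤ c * Real.exp (birkhoff φ k ω - k * 0) := h1
      _ = c * Real.exp (birkhoff φ k ω) := by norm_num
  by_contra hcon
  push_neg at hcon
  obtain ⟨ω₁, _⟩ := hcon 1 one_pos
  choose useq0 huseq0 using hcon
  set useq : ℕ → SigmaA l A := fun N => if h : 0 < N then useq0 N h else ω₁ with huseq_def
  have huseq : ∀ N, 0 < N → 0 ≤ birkhoff φ N (useq N) := by
    intro N hN
    simp only [huseq_def, dif_pos hN]
    exact huseq0 N hN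
  obtain ⟨U, hU⟩ := Ultrafilter.exists_le (atTop : Filter ℕ)
  have hcoord : ∀ i : ℕ, ∃ v : Fin l, {N | (useq N).1 i = v} ∈ U := by
    intro i
    obtain ⟨v, hv⟩ := (U.map (fun N => (useq N).1 i)).eq_pure_of_finite
    refine ⟨v, ?_⟩
    have hmem : {v} ∈ U.map (fun N => (useq N).1 i) := by
      rw [hv]
      exact Ultrafilter.mem_pure.2 rfl
    have := Ultrafilter.mem_map.1 hmem
    simpa [Set.preimage] using this
  choose g hg using hcoord
  have hadm : ∀ k, A (g k) (g (k + 1)) = 1 := by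
    intro k
    have hmem : {N | (useq N).1 k = g k} ∩ {N | (useq N).1 (k + 1) = g (k + 1)} ∈ U :=
      Filter.inter_mem (hg k) (hg (k + 1))
    obtain ⟨N, hN1, hN2⟩ := Ultrafilter.nonempty_of_mem hmem
    rw [← hN1, ← hN2]
    exact (useq N).2 k
  set ωstar : SigmaA l A := ⟨g, hadm⟩ with hws
  have hwsc : ∀ i, ωstar.1 i = g i := fun i => rfl
  have hheavy : ∀ k, 0 < k → c⁻¹ ≤ (μ (cylinder A (wordPrefix ωstar k))).toReal := by
    intro k hk
    have hset : ((⋂ i ∈ Finset.range k, {N | (useq N).1 i = g i}) ∩ {N | k ≤ N}) ∈ U := by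
      refine Filter.inter_mem ?_ (hU (mem_atTop k))
      exact (Filter.biInter_finset_mem _).2 (fun i _ => hg i)
    obtain ⟨N, hN1, hN2⟩ := Ultrafilter.nonempty_of_mem hset
    simp only [Set.mem_iInter, Set.mem_setOf_eq] at hN1 hN2
    have hNk : k ≤ N := hN2
    have hN0 : 0 < N := lt_of_lt_of_le hk hNk
    have hpre : wordPrefix ωstar k = wordPrefix (useq N) k :=
      wordPrefix_eq_of_agree _ _ _ (fun i hi => ((hN1 i (Finset.mem_range.2 hi))).symm)
    rw [hpre]
    have step1 : c⁻¹ ≤ c⁻¹ * Real.exp (birkhoff φ N (useq N)) := by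
      have h1 : (1:ℝ) ≤ Real.exp (birkhoff φ N (useq N)) := Real.one_le_exp (huseq N hN0)
      nlinarith
    have step2 := glower (useq N) N hN0
    have step3 : (μ (cylinder A (wordPrefix (useq N) N))).toReal
        ≤ (μ (cylinder A (wordPrefix (useq N) k))).toReal :=
      ENNReal.toReal_mono (measure_ne_top μ _) (measure_mono (cylinder_anti _ hNk))
    linarith
  obtain ⟨C, s, hC, hs, hH⟩ := holder_exists_nonneg φ hφ
  set D := C * (1 - (2:ℝ) ^ (-s))⁻¹ with hD
  obtain ⟨h01, n, hn0, hpos⟩ := hA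
  have hA' : Primitive A := ⟨h01, n, hn0, hpos⟩
  obtain ⟨r0, s1, s2, hs12, hrs1, hrs2⟩ := exists_branch hl hA'
  have hm0 : ∀ υ : SigmaA l A, φ ωstar - C ≤ φ υ := by
    intro υ
    have hb := hH υ ωstar 0 (by omega)
    simp only [Nat.cast_zero, mul_zero, neg_zero, Real.rpow_zero, mul_one] at hb
    have := abs_le.1 hb
    linarith [this.1]
  set m0 : ℝ := φ ωstar - C with hm0def
  have hbirk_lb : ∀ (q : ℕ) (ψ : SigmaA l A), (q:ℝ) * m0 ≤ birkhoff φ q ψ := by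
    intro q ψ
    have : ∑ m ∈ Finset.range q, m0 ≤ ∑ m ∈ Finset.range q, φ (shift^[m] ψ) :=
      Finset.sum_le_sum (fun m _ => hm0 _)
    simpa [birkhoff, Finset.sum_const, Finset.card_range, nsmul_eq_mul] using this
  set κ : ℝ := c⁻¹ * c⁻¹ * Real.exp (-D + ((n:ℝ) + 2) * m0) with hκ
  have hκ0 : 0 < κ := by positivity
  have main : ∀ j : ℕ, ∀ k, 0 < k →
      c⁻¹ * (1 + κ) ^ j ≤ (μ (cylinder A (wordPrefix ωstar k))).toReal := by
    intro j
    induction j with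
    | zero => simpa using hheavy
    | succ j ih =>
      intro k hk
      set b : ℝ := c⁻¹ * (1 + κ) ^ j with hb
      have hb0 : 0 < b := by positivity
      have h1 : b ≤ (μ (cylinder A (wordPrefix ωstar k))).toReal := ih k hk
      have hup := gupper ωstar k hk
      have hbE : b ≤ c * Real.exp (birkhoff φ k ωstar) := le_trans h1 hup
      have hexp : b * c⁻¹ ≤ Real.exp (birkhoff φ k ωstar) := by
        have h2 := mul_le_mul_of_nonneg_right hbE hcinv.le
        calc b * c⁻¹ ≤ (c * Real.exp (birkhoff φ k ωstar)) * c⁻¹ := h2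
          _ = Real.exp (birkhoff φ k ωstar) := by field_simp
      obtain ⟨t, ht⟩ := exists_succ hA' (g (k - 1))
      obtain ⟨gp, hgp0, hgpn, hgpadj⟩ := exists_path hA' n t r0 (hpos t r0).ne'
      set sb : Fin l := if s1 = g (k + n + 1) then s2 else s1 with hsb
      have hsb_ne : sb ≠ g (k + n + 1) := by
        rw [hsb]; split_ifs with h
        · rw [← h]; exact fun e => hs12 e.symm
        · exact h
      have hsb_edge : A r0 sb = 1 := by
        rw [hsb]; split_ifs <;> assumption
      set x : ℕ → Fin l :=
        fun m => if m < k then g m else if m ≤ k + n then gp (m - k) else sb with hx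
      have hxval_lt : ∀ m < k, x m = g m := by
        intro m hm; simp [hx, hm]
      have hxval_mid : ∀ m, k ≤ m → m ≤ k + n → x m = gp (m - k) := by
        intro m hm1 hm2; simp [hx, if_neg (by omega : ¬ m < k), if_pos hm2]
      have hxval_last : x (k + n + 1) = sb := by
        simp [hx, if_neg (by omega : ¬ k + n + 1 < k), if_neg (by omega : ¬ k + n + 1 ≤ k + n)]
      have hadmx : ∀ m, m + 1 < k + n + 2 → A (x m) (x (m + 1)) = 1 := by
        intro m hm
        rcases Nat.lt_or_ge (m + 1) k with h1 | h1
        · rw [hxval_lt m (by omega), hxval_lt (m + 1) h1]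
          exact hadm m
        · rcases Nat.lt_or_ge m k with h2 | h2
          · rw [hxval_lt m h2, hxval_mid (m + 1) (by omega) (by omega)]
            rw [show m + 1 - k = 0 by omega, hgp0, show m = k - 1 by omega]
            exact ht
          · rcases Nat.lt_or_ge (k + n) (m + 1) with h3 | h3
            · have hmeq : m = k + n := by omega
              subst hmeq
              rw [hxval_mid (k + n) (by omega) le_rfl, show k + n - k = n by omega, hgpn,
                hxval_last]
              exact hsb_edge
            · rw [hxval_mid m (by omega) (by omega), hxval_mid (m + 1) (by omega) h3]
              rw [show m + 1 - k = (m - k) + 1 by omega]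
              exact hgpadj (m - k) (by omega)
      obtain ⟨ζ, hζ⟩ := exists_extension hA' x (k + n + 2) (by omega) hadmx
      have hζk : ∀ i < k, ζ.1 i = ωstar.1 i := by
        intro i hi
        rw [hζ i (by omega), hxval_lt i hi, hwsc]
      have hprefk : wordPrefix ζ k = wordPrefix ωstar k := wordPrefix_eq_of_agree _ _ _ hζk
      have hsub : cylinder A (wordPrefix ζ (k + n + 2)) ⊆ cylinder A (wordPrefix ωstar k) := by
        intro υ hυ
        rw [← hprefk]
        exact cylinder_anti ζ (by omega) hυ
      have hdisj : Disjoint (cylinder A (wordPrefix ωstar (k + n + 2)))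
          (cylinder A (wordPrefix ζ (k + n + 2))) := by
        rw [Set.disjoint_left]
        intro υ hυ1 hυ2
        have e1 : υ.1 (k + n + 1) = ωstar.1 (k + n + 1) :=
          (mem_cylinder_iff _ _ _).1 hυ1 _ (by omega)
        have e2 : υ.1 (k + n + 1) = ζ.1 (k + n + 1) :=
          (mem_cylinder_iff _ _ _).1 hυ2 _ (by omega)
        have e3 : ζ.1 (k + n + 1) = sb := by rw [hζ _ (by omega), hxval_last]
        exact hsb_ne ((e3.symm.trans e2.symm).trans (e1.trans (hwsc _)))
      have hmeas : (μ (cylinder A (wordPrefix ωstar (k + n + 2)))).toReal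
          + (μ (cylinder A (wordPrefix ζ (k + n + 2)))).toReal
          ≤ (μ (cylinder A (wordPrefix ωstar k))).toReal := by
        have hsub2 : cylinder A (wordPrefix ωstar (k + n + 2))
            ∪ cylinder A (wordPrefix ζ (k + n + 2))
            ⊆ cylinder A (wordPrefix ωstar k) :=
          Set.union_subset (cylinder_anti ωstar (by omega)) hsub
        have hmono := measure_mono (μ := μ) hsub2
        rw [measure_union hdisj (measurableSet_cylinder _)] at hmono
        have h5 := ENNReal.toReal_mono (measure_ne_top μ _) hmono
        rwa [ENNReal.toReal_add (measure_ne_top μ _) (measure_ne_top μ _)] at h5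
      have hKstar : b ≤ (μ (cylinder A (wordPrefix ωstar (k + n + 2)))).toReal :=
        ih (k + n + 2) (by omega)
      have hbzeta : b * κ ≤ (μ (cylinder A (wordPrefix ζ (k + n + 2)))).toReal := by
        have hglow := glower ζ (k + n + 2) (by omega)
        have hbadd : birkhoff φ (k + n + 2) ζ
            = birkhoff φ k ζ + birkhoff φ (n + 2) (shift^[k] ζ) := birkhoff_add φ k (n + 2) ζ
        have hdist := birkhoff_dist hC hs hH ζ ωstar k hζk
        have hd1 : birkhoff φ k ωstar - D ≤ birkhoff φ k ζ := by
          have h6 := abs_le.1 hdist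
          have h7 : C * (1 - (2:ℝ) ^ (-s))⁻¹ = D := hD.symm
          rw [h7] at h6
          linarith [h6.1]
        have hd2 : ((n:ℝ) + 2) * m0 ≤ birkhoff φ (n + 2) (shift^[k] ζ) := by
          have h8 := hbirk_lb (n + 2) (shift^[k] ζ)
          push_cast at h8
          linarith
        have hdK : birkhoff φ k ωstar - D + ((n:ℝ) + 2) * m0 ≤ birkhoff φ (k + n + 2) ζ := by
          rw [hbadd]; linarith
        have hexpK : Real.exp (birkhoff φ k ωstar) * Real.exp (-D + ((n:ℝ) + 2) * m0)
            ≤ Real.exp (birkhoff φ (k + n + 2) ζ) := by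
          rw [← Real.exp_add]
          exact Real.exp_le_exp.2 (by linarith)
        have hexp2 : (b * c⁻¹) * Real.exp (-D + ((n:ℝ) + 2) * m0)
            ≤ Real.exp (birkhoff φ (k + n + 2) ζ) :=
          le_trans (mul_le_mul_of_nonneg_right hexp (Real.exp_nonneg _)) hexpK
        calc b * κ = c⁻¹ * ((b * c⁻¹) * Real.exp (-D + ((n:ℝ) + 2) * m0)) := by rw [hκ]; ring
          _ ≤ c⁻¹ * Real.exp (birkhoff φ (k + n + 2) ζ) :=
              mul_le_mul_of_nonneg_left hexp2 hcinv.le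
          _ ≤ _ := hglow
      calc c⁻¹ * (1 + κ) ^ (j + 1) = b * (1 + κ) := by rw [hb]; ring
        _ = b + b * κ := by ring
        _ ≤ _ := by linarith [hmeas, hKstar, hbzeta]
  have hT1 : (μ (cylinder A (wordPrefix ωstar 1))).toReal ≤ 1 := by
    have h9 := prob_le_one (μ := μ) (s := cylinder A (wordPrefix ωstar 1))
    have h10 := ENNReal.toReal_mono (by simp) h9
    simpa using h10
  obtain ⟨j, hj⟩ := pow_unbounded_of_one_lt c (by linarith : (1:ℝ) < 1 + κ)
  have hgt : 1 < c⁻¹ * (1 + κ) ^ j := by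
    have h2 := mul_lt_mul_of_pos_left hj hcinv
    rwa [inv_mul_cancel₀ hc0.ne'] at h2
  linarith [main j 1 one_pos, hT1]

/-- A Hölder continuous potential with zero pressure is cohomologous to a
strictly negative Hölder continuous function. -/
theorem cohomologous_strictly_negative
    (hl : 2 ≤ l) (A : Matrix (Fin l) (Fin l) ℕ) (hA : Primitive A)
    (φ : SigmaA l A → ℝ) (hφ : HolderCont φ)
    (hzero : ∃ μ : Measure (SigmaA l A), IsProbabilityMeasure μ ∧ IsGibbs φ 0 μ) :
    ∃ u : SigmaA l A → ℝ, HolderCont u ∧ ∀ ω, φ ω + u ω - u (shift ω) < 0 := by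
  obtain ⟨μ, hprob, hGibbs⟩ := hzero
  haveI := hprob
  obtain ⟨N, hN0, hNneg⟩ := exists_birkhoff_neg hl hA hφ μ hGibbs
  obtain ⟨C, s, hC, hs, hH⟩ := holder_exists_nonneg φ hφ
  have hNne : ((N:ℝ)) ≠ 0 := Nat.cast_ne_zero.2 hN0.ne'
  refine ⟨fun ω => (-(1/(N:ℝ))) * ∑ m ∈ Finset.range N, birkhoff φ m ω, ?_, ?_⟩
  · have hsum : HolderWith (∑ m ∈ Finset.range N, ∑ j ∈ Finset.range m, C * ((2:ℝ) ^ s) ^ j) s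
        (fun ω => ∑ m ∈ Finset.range N, birkhoff φ m ω) := by
      apply HolderWith.sum (c := fun m => ∑ j ∈ Finset.range m, C * ((2:ℝ) ^ s) ^ j)
      intro m
      exact HolderWith.sum (c := fun j => C * ((2:ℝ) ^ s) ^ j)
        (F := fun j ω => φ (shift^[j] ω)) (fun j => hH.comp_iterate hC hs j) m
    have hfinal := hsum.const_mul (-(1/(N:ℝ)))
    exact ⟨_, s, hs, hfinal⟩
  · intro ω
    have hshift : ∑ m ∈ Finset.range N, birkhoff φ m (shift ω)
        = ∑ m ∈ Finset.range N, birkhoff φ m ω + birkhoff φ N ω - (N:ℝ) * φ ω := by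
      have hterm : ∀ m, birkhoff φ m (shift ω) = birkhoff φ (m + 1) ω - φ ω := by
        intro m
        have h2 := birkhoff_add φ 1 m ω
        have h3 : birkhoff φ 1 ω = φ ω := by simp [birkhoff]
        have h4 : shift^[1] ω = shift ω := rfl
        rw [h3, h4] at h2
        rw [show 1 + m = m + 1 by omega] at h2
        linarith
      rw [Finset.sum_congr rfl (fun m _ => hterm m)]
      rw [Finset.sum_sub_distrib, Finset.sum_const, Finset.card_range, nsmul_eq_mul]
      have h6 := Finset.sum_range_succ' (fun m => birkhoff φ m ω) N
      have h7 := Finset.sum_range_succ (fun m => birkhoff φ m ω) N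
      have h8 : birkhoff φ 0 ω = 0 := by simp [birkhoff]
      rw [h7, h8] at h6
      linarith
    have key : φ ω + (-(1/(N:ℝ))) * ∑ m ∈ Finset.range N, birkhoff φ m ω
        - (-(1/(N:ℝ))) * ∑ m ∈ Finset.range N, birkhoff φ m (shift ω)
        = (1/(N:ℝ)) * birkhoff φ N ω := by
      rw [hshift]
      field_simp
      ring
    rw [key]
    exact mul_neg_of_pos_of_neg (by positivity) (hNneg ω)

end SFT
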